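/- If γ is an element of GL_N(ℤ) of prime order p, then p ≤ N + 1. -/
import Mathlib

open Polynomial

/-- If γ ∈ GL_N(ℤ) has prime order p, then p ≤ N + 1. -/
theorem prime_order_in_GL_le (N p : ℕ) (hp : p.Prime)
    (γ : GL (Fin N) ℤ) (hγ : orderOf γ = p) : p ≤ N + 1 := by
  rcases Nat.eq_zero_or_pos N with hN | hN
  · subst hN
    have hγ1 : γ = 1 := Subsingleton.elim _ _
    rw [hγ1, orderOf_one] at hγ
    exact absurd hγ.symm hp.ne_one
  haveI : Nonempty (Fin N) := ⟨⟨0, hN⟩⟩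
  set φ : Matrix (Fin N) (Fin N) ℤ →+* Matrix (Fin N) (Fin N) ℚ :=
    (Int.castRingHom ℚ).mapMatrix with hφ
  set M : Matrix (Fin N) (Fin N) ℚ := φ γ.val with hM
  have hγp : γ ^ p = 1 := by rw [← hγ]; exact pow_orderOf_eq_one γ
  have hvp : (γ.val) ^ p = 1 := by
    have := congrArg Units.val hγp
    simpa using this
  have hMp : M ^ p = 1 := by rw [hM, ← map_pow, hvp, map_one]
  have hφinj : Function.Injective φ := by
    intro A B h
    ext i j
    have h2 : (φ A) i j = (φ B) i j := by rw [h]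
    simpa [hφ, Matrix.map_apply] using Int.cast_injective h2
  have hM1 : M ≠ 1 := by
    intro h
    have h1 : γ.val = 1 := hφinj (by rw [← hM, h, map_one])
    have : γ = 1 := Units.ext h1
    rw [this, orderOf_one] at hγ
    exact hp.ne_one hγ.symm
  have hint : IsIntegral ℚ M := ⟨M.charpoly, M.charpoly_monic, M.aeval_self_charpoly⟩
  have hroot : Polynomial.aeval M (X ^ p - 1 : ℚ[X]) = 0 := by
    simp [hMp]
  have hdvd : minpoly ℚ M ∣ (X ^ p - 1 : ℚ[X]) := minpoly.dvd ℚ M hroot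
  have hfact : (X ^ p - 1 : ℚ[X]) = cyclotomic 1 ℚ * cyclotomic p ℚ := by
    rw [← prod_cyclotomic_eq_X_pow_sub_one hp.pos, hp.divisors,
      Finset.prod_pair hp.ne_one.symm]
  have hcyc : cyclotomic p ℚ ∣ minpoly ℚ M := by
    by_contra h
    have hirr : Irreducible (cyclotomic p ℚ) := cyclotomic.irreducible_rat hp.pos
    have hcop : IsCoprime (minpoly ℚ M) (cyclotomic p ℚ) :=
      ((hirr.coprime_iff_not_dvd).mpr h).symm
    have hdvd1 : minpoly ℚ M ∣ cyclotomic 1 ℚ :=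
      hcop.dvd_of_dvd_mul_right (hfact ▸ hdvd)
    rw [cyclotomic_one] at hdvd1
    obtain ⟨c, hc⟩ := hdvd1
    have : Polynomial.aeval M ((X : ℚ[X]) - 1) = 0 := by
      rw [hc, map_mul, minpoly.aeval, zero_mul]
    simp only [map_sub, Polynomial.aeval_X, map_one, sub_eq_zero] at this
    exact hM1 this
  have h1 : (cyclotomic p ℚ).natDegree ≤ (minpoly ℚ M).natDegree :=
    natDegree_le_of_dvd hcyc (minpoly.ne_zero hint)
  have h2 : minpoly ℚ M ∣ M.charpoly := minpoly.dvd ℚ M M.aeval_self_charpoly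
  have h3 : (minpoly ℚ M).natDegree ≤ N := by
    have := natDegree_le_of_dvd h2 M.charpoly_monic.ne_zero
    simpa [Matrix.charpoly_natDegree_eq_dim] using this
  rw [natDegree_cyclotomic, Nat.totient_prime hp] at h1
  omega
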